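/- Let F be a field of characteristic 2, let (A,σ) be a central simple F-algebra with involution of the first kind, let B be a simple F-subalgebra of A with center F such that σ(B) = B, and let C = C_A(B) be the centralizer of B in A. If 1 ∈ Alt(C,σ|_C) (i.e. σ|_C is of symplectic type), then Alt(A,σ) ∩ B ≠ Alt(B,σ|_B); indeed for every x ∈ Sym(B,σ|_B) \ Alt(B,σ|_B) one has x ∈ Alt(A,σ). -/

import Mathlib

/-!
An element `c` of the centralizer with `c - σ c = 1` turns every symmetric `x ∈ B` into an
alternating element of `A`, since `c x - σ (c x) = c x - x (c - 1) = x`. So it suffices that `B`,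
with the restricted involution `τ`, has a symmetric element that is not alternating in `B`.

Suppose instead that `Sym = Alt`. In characteristic 2, `ε = 1 - τ` then satisfies
`ker ε = range ε`, so `dim B = 2a` with `a = rank ε`, and an endomorphism of `B` commuting with
`τ` commutes with `ε` and is determined by its values on a complement of `ker ε`: the centralizer
of `τ` in `End_F B` has dimension at most `a · 2a`. On the other hand, for a basis `(eᵢ)` of `B`,
the maps `x ↦ ∑ f {i, j} • eᵢ x τ(eⱼ)` with symmetric coefficients commute with `τ`, and they are
linearly independent by Artin–Whaples independence in the central simple algebra `B`; this gives
dimension at least `(2a + 1) a`. Hence `a = 0`, which is absurd.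
-/

open Module

section ArtinWhaples

variable {K B ι : Type*} [CommRing K] [Ring B] [Algebra K B] [Fintype ι]

def IsSandwichRelation (c a : ι → B) : Prop := ∀ x, ∑ j, a j * x * c j = 0

theorem IsSandwichRelation.commutator {c a : ι → B} (ha : IsSandwichRelation c a) (b : B) :
    IsSandwichRelation c fun j => b * a j - a j * b := fun x => by
  have h₁ := ha x
  have h₂ := ha (b * x)
  simp only [mul_assoc] at h₁ h₂
  simp only [sub_mul, Finset.sum_sub_distrib, mul_assoc, ← Finset.mul_sum, h₁, h₂, mul_zero,
    sub_zero]

def relationCoeffIdeal (c : ι → B) (s : Finset ι) (j₀ : ι) : TwoSidedIdeal B :=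
  .mk' {b | ∃ a, IsSandwichRelation c a ∧ (∀ j ∉ s, a j = 0) ∧ a j₀ = b}
    ⟨0, fun _ => by simp, by simp, rfl⟩
    (fun ⟨a, ha, has, ha₀⟩ ⟨a', ha', has', ha'₀⟩ => ⟨a + a',
      fun x => by simp [add_mul, Finset.sum_add_distrib, ha x, ha' x],
      fun j hj => by simp [has j hj, has' j hj], by simp [ha₀, ha'₀]⟩)
    (fun ⟨a, ha, has, ha₀⟩ => ⟨-a, fun x => by simp [Finset.sum_neg_distrib, ha x],
      fun j hj => by simp [has j hj], by simp [ha₀]⟩)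
    (fun {u _} ⟨a, ha, has, ha₀⟩ => ⟨fun j => u * a j,
      fun x => by simp only [mul_assoc, ← Finset.mul_sum]; simp [← mul_assoc, ha x],
      fun j hj => by simp [has j hj], by simp [ha₀]⟩)
    (fun {_ v} ⟨a, ha, has, ha₀⟩ => ⟨fun j => a j * v,
      fun x => by simpa only [mul_assoc] using ha (v * x),
      fun j hj => by simp [has j hj], by simp [ha₀]⟩)

theorem mem_relationCoeffIdeal {c : ι → B} {s : Finset ι} {j₀ : ι} {b : B} :
    b ∈ relationCoeffIdeal c s j₀ ↔
      ∃ a, IsSandwichRelation c a ∧ (∀ j ∉ s, a j = 0) ∧ a j₀ = b :=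
  TwoSidedIdeal.mem_mk' ..

theorem one_mem_relationCoeffIdeal [IsSimpleRing B] {c a : ι → B} {s : Finset ι}
    (ha : IsSandwichRelation c a) (has : ∀ j ∉ s, a j = 0) {j₀ : ι} (hj₀ : a j₀ ≠ 0) :
    1 ∈ relationCoeffIdeal c s j₀ := by
  have hmem : a j₀ ∈ relationCoeffIdeal c s j₀ := mem_relationCoeffIdeal.mpr ⟨a, ha, has, rfl⟩
  rcases eq_bot_or_eq_top (relationCoeffIdeal c s j₀) with h | h
  · exact absurd (by simpa [h] using hmem) hj₀
  · simp [h]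

theorem IsSandwichRelation.eq_zero [IsSimpleRing B] [Algebra.IsCentral K B] {c a : ι → B}
    (hc : LinearIndependent K c) (ha : IsSandwichRelation c a) : a = 0 := by
  classical
  suffices ∀ s : Finset ι, ∀ a, IsSandwichRelation c a → (∀ j ∉ s, a j = 0) → a = 0 from
    this .univ a ha (by simp)
  intro s
  induction s using Finset.strongInduction with | H s ih => ?_
  intro a ha has
  by_contra hne
  obtain ⟨j₀, hj₀⟩ := Function.ne_iff.mp hne
  have hj₀s : j₀ ∈ s := by_contra fun h => hj₀ (has j₀ h)
  obtain ⟨a', ha', has', ha'₀⟩ := mem_relationCoeffIdeal.mp (one_mem_relationCoeffIdeal ha has hj₀)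
  -- Since `a' j₀ = 1`, the commutator relations are supported in `s.erase j₀`.
  have hcentral : ∀ j, a' j ∈ Subalgebra.center K B := fun j => by
    refine Subalgebra.mem_center_iff.mpr fun b => sub_eq_zero.mp ?_
    have hcomm := ih _ (Finset.erase_ssubset hj₀s) _ (ha'.commutator b) fun i hi => by
      rcases eq_or_ne i j₀ with rfl | hne
      · simp [ha'₀]
      · simp [has' i (by simpa [hne] using hi)]
    exact congrFun hcomm j
  choose r hr using fun j => Algebra.mem_bot.mp (Algebra.IsCentral.out (hcentral j))
  have := Fintype.linearIndependent_iff.mp hc r (by simpa [← hr, Algebra.smul_def] using ha' 1) j₀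
  simp [← hr, this] at ha'₀

end ArtinWhaples
section Centralizer

variable {F V : Type*} [Field F] [AddCommGroup V] [Module F V]

theorem eq_zero_of_commute_of_ker_le_range {ε f : Module.End F V} (hf : Commute f ε)
    (hker : LinearMap.ker ε ≤ LinearMap.range ε) {U : Submodule F V}
    (hU : Codisjoint (LinearMap.ker ε) U) (hfU : ∀ u ∈ U, f u = 0) : f = 0 := by
  have hrange : LinearMap.range ε ≤ LinearMap.ker f := by
    rintro _ ⟨y, rfl⟩
    obtain ⟨k, hk, u, hu, rfl⟩ := Submodule.mem_sup.mp (hU.eq_top ▸ Submodule.mem_top (x := y))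
    rw [LinearMap.mem_ker, map_add, LinearMap.mem_ker.mp hk, zero_add, ← Module.End.mul_apply,
      hf.eq, Module.End.mul_apply, hfU u hu, map_zero]
  have htop : ⊤ ≤ LinearMap.ker f := hU.eq_top ▸ sup_le (hker.trans hrange) hfU
  exact LinearMap.ker_eq_top.mp (top_le_iff.mp htop)

theorem finrank_centralizer_le_of_ker_le_range [FiniteDimensional F V] {ε : Module.End F V}
    (hker : LinearMap.ker ε ≤ LinearMap.range ε) :
    finrank F (Subalgebra.centralizer F {ε}) ≤ finrank F (LinearMap.range ε) * finrank F V := by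
  obtain ⟨U, hU⟩ := Submodule.exists_isCompl (LinearMap.ker ε)
  have hUrange : finrank F U = finrank F (LinearMap.range ε) :=
    ((Submodule.quotientEquivOfIsCompl _ U hU).symm.trans ε.quotKerEquivRange).finrank_eq
  let restrictToU : Subalgebra.centralizer F {ε} →ₗ[F] U →ₗ[F] V :=
    LinearMap.lcomp F V U.subtype ∘ₗ (Subalgebra.centralizer F {ε}).val.toLinearMap
  have hinj : Function.Injective restrictToU := by
    refine (injective_iff_map_eq_zero _).mpr fun f hf => Subtype.ext ?_
    refine eq_zero_of_commute_of_ker_le_range ?_ hker hU.codisjoint fun u hu => ?_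
    · exact ((Subalgebra.mem_centralizer_iff F).mp f.2 ε rfl).symm
    · exact LinearMap.congr_fun hf ⟨u, hu⟩
  calc finrank F (Subalgebra.centralizer F {ε})
      ≤ finrank F (U →ₗ[F] V) := LinearMap.finrank_le_finrank_of_injective hinj
    _ = _ := by rw [Module.finrank_linearMap, hUrange]

end Centralizer

section SymmetricSandwich

variable {F B : Type*} [Field F] [Ring B] [Algebra F B] {ι : Type*} [Fintype ι]

def symSandwich (e : ι → B) (τ : B →ₗ[F] B) : (Sym2 ι → F) →ₗ[F] Module.End F B where
  toFun f := ∑ i, ∑ j, f s(i, j) • LinearMap.mulLeftRight F (e i, τ (e j))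
  map_add' f g := by simp [add_smul, Finset.sum_add_distrib]
  map_smul' r f := by simp [mul_smul, Finset.smul_sum]

theorem symSandwich_apply (e : ι → B) (τ : B →ₗ[F] B) (f : Sym2 ι → F) (x : B) :
    symSandwich e τ f x = ∑ i, ∑ j, f s(i, j) • (e i * x * τ (e j)) := by
  simp [symSandwich, LinearMap.mulLeftRight_apply]

theorem symSandwich_mem_centralizer (e : ι → B) {τ : B →ₗ[F] B}
    (hanti : ∀ x y, τ (x * y) = τ y * τ x) (hinv : ∀ x, τ (τ x) = x) (f : Sym2 ι → F) :
    symSandwich e τ f ∈ Subalgebra.centralizer F {τ} := by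
  rw [Subalgebra.mem_centralizer_iff]
  rintro _ rfl
  ext x
  simp only [Module.End.mul_apply, symSandwich_apply, map_sum, map_smul, hanti, hinv, mul_assoc]
  rw [Finset.sum_comm]
  simp only [Sym2.eq_swap]

theorem symSandwich_injective [IsSimpleRing B] [Algebra.IsCentral F B] (e : Basis ι F B)
    {τ : B →ₗ[F] B} (hτ : Function.Injective τ) : Function.Injective (symSandwich e τ) := by
  refine (injective_iff_map_eq_zero _).mpr fun f hf => ?_
  have hcol : ∀ j, ∑ i, f s(i, j) • e i = 0 := by
    refine congrFun (IsSandwichRelation.eq_zero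
      (e.linearIndependent.map' τ (LinearMap.ker_eq_bot.mpr hτ)) fun x => ?_)
    have h := LinearMap.congr_fun hf x
    rw [symSandwich_apply, Finset.sum_comm] at h
    simpa only [Finset.sum_mul, smul_mul_assoc, Function.comp_apply, LinearMap.zero_apply]
      using h
  funext z
  induction z using Sym2.ind with
  | _ i j => exact Fintype.linearIndependent_iff.mp e.linearIndependent _ (hcol j) i

theorem choose_two_le_finrank_centralizer [FiniteDimensional F B] [IsSimpleRing B]
    [Algebra.IsCentral F B] {τ : B →ₗ[F] B} (hanti : ∀ x y, τ (x * y) = τ y * τ x)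
    (hinv : ∀ x, τ (τ x) = x) :
    (finrank F B + 1).choose 2 ≤ finrank F (Subalgebra.centralizer F {τ}) := by
  let L := (symSandwich (Module.finBasis F B) τ).codRestrict
    (Subalgebra.toSubmodule (Subalgebra.centralizer F {τ}))
    (symSandwich_mem_centralizer _ hanti hinv)
  have hL : Function.Injective L := fun f g hfg =>
    symSandwich_injective _ (Function.LeftInverse.injective hinv) (congrArg Subtype.val hfg)
  simpa [Sym2.card] using LinearMap.finrank_le_finrank_of_injective hL

end SymmetricSandwich

section Involution

variable {F B : Type*} [Field F] [Ring B] [Algebra F B]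

theorem range_one_sub_le_ker_one_sub {V : Type*} [AddCommGroup V] [Module F V]
    (h2 : (2 : F) = 0) {τ : Module.End F V} (hinv : ∀ x, τ (τ x) = x) :
    LinearMap.range (1 - τ) ≤ LinearMap.ker (1 - τ) := by
  rintro _ ⟨y, rfl⟩
  have h2y : (2 : F) • (y - τ y) = 0 := by rw [h2, zero_smul]
  simp only [LinearMap.mem_ker, LinearMap.sub_apply, Module.End.one_apply, map_sub, hinv]
  rw [← h2y, two_smul]
  abel

theorem exists_symm_not_alt [FiniteDimensional F B] [IsSimpleRing B] [Algebra.IsCentral F B]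
    (h2 : (2 : F) = 0) {τ : B →ₗ[F] B} (hanti : ∀ x y, τ (x * y) = τ y * τ x)
    (hinv : ∀ x, τ (τ x) = x) : ∃ x, τ x = x ∧ ¬ ∃ y, y - τ y = x := by
  by_contra! hsymm
  set ε : Module.End F B := 1 - τ
  have hker : LinearMap.ker ε ≤ LinearMap.range ε := fun x hx =>
    hsymm x (sub_eq_zero.mp hx).symm
  have hdim : finrank F B = 2 * finrank F (LinearMap.range ε) := by
    have := LinearMap.finrank_range_add_finrank_ker ε
    rw [le_antisymm hker (range_one_sub_le_ker_one_sub h2 hinv)] at this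
    omega
  have hcent : Subalgebra.centralizer F {τ} ≤ Subalgebra.centralizer F {ε} := by
    intro f hf
    rw [Subalgebra.mem_centralizer_iff] at hf ⊢
    rintro _ rfl
    exact ((Commute.one_left f).sub_left (hf τ rfl) :)
  have hlower := choose_two_le_finrank_centralizer hanti hinv
  have hupper := finrank_centralizer_le_of_ker_le_range hker
  have hmono := Submodule.finrank_mono (Subalgebra.toSubmodule.monotone hcent)
  rw [Subalgebra.finrank_toSubmodule, Subalgebra.finrank_toSubmodule] at hmono
  have hpos : 0 < finrank F B := finrank_pos
  set a := finrank F (LinearMap.range ε)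
  have hchoose : (finrank F B + 1).choose 2 = (2 * a + 1) * a := by
    rw [Nat.choose_two_right, hdim, Nat.add_sub_cancel, mul_left_comm,
      Nat.mul_div_cancel_left _ two_pos]
  nlinarith

theorem Subalgebra.exists_symm_not_alt {A : Type*} [Ring A] [Algebra F A] (S : Subalgebra F A)
    [FiniteDimensional F S] [IsSimpleRing S] [Algebra.IsCentral F S] (h2 : (2 : F) = 0)
    {σ : A →ₗ[F] A} (hanti : ∀ x y, σ (x * y) = σ y * σ x) (hinv : ∀ x, σ (σ x) = x)
    (hσS : ∀ x ∈ S, σ x ∈ S) : ∃ x ∈ S, σ x = x ∧ ¬ ∃ y ∈ S, y - σ y = x := by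
  let τ : S →ₗ[F] S :=
    σ.restrict (p := Subalgebra.toSubmodule S) (q := Subalgebra.toSubmodule S) hσS
  obtain ⟨⟨x, hx⟩, hsymm, hnalt⟩ := _root_.exists_symm_not_alt h2 (τ := τ)
    (fun x y => Subtype.ext (hanti x y)) (fun x => Subtype.ext (hinv x))
  exact ⟨x, hx, congrArg Subtype.val hsymm, fun ⟨y, hy, hyx⟩ => hnalt ⟨⟨y, hy⟩, Subtype.ext hyx⟩⟩

end Involution

theorem mul_sub_map_mul_eq_of_commute {A : Type*} [Ring A] {σ : A → A}
    (hanti : ∀ x y, σ (x * y) = σ y * σ x) {c x : A} (hc : c - σ c = 1) (hxc : Commute x c)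
    (hx : σ x = x) : c * x - σ (c * x) = x := by
  have hσc : σ c = c - 1 := by rw [← hc, sub_sub_cancel]
  rw [hanti, hx, hσc, mul_sub, mul_one, hxc.eq, sub_sub_cancel]

theorem alt_inter_subalgebra_ne_alt_of_symplectic_centralizer_general
    (F : Type) [Field F] (hF : ringChar F = 2)
    (A : Type) [Ring A] [Algebra F A] [FiniteDimensional F A]
    (σ : A →ₗ[F] A)
    (hanti : ∀ x y, σ (x * y) = σ y * σ x)
    (hinv : ∀ x, σ (σ x) = x)
    (B : Subalgebra F A)
    (hBsimple : IsSimpleRing B)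
    (hBcentral : Subalgebra.center F B = ⊥)
    (hσB : ∀ x, x ∈ B ↔ σ x ∈ B)
    (hsymp : ∃ c ∈ Subalgebra.centralizer F (B : Set A), c - σ c = 1) :
    (¬ ∀ x ∈ B, ((∃ y : A, y - σ y = x) ↔ (∃ y ∈ B, y - σ y = x))) ∧
    ∀ x ∈ B, σ x = x → (¬ ∃ y ∈ B, y - σ y = x) → ∃ y : A, y - σ y = x := by
  obtain ⟨c, hcB, hc⟩ := hsymp
  have hsymm_alt : ∀ x ∈ B, σ x = x → c * x - σ (c * x) = x := fun x hx hsx =>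
    mul_sub_map_mul_eq_of_commute hanti hc ((Subalgebra.mem_centralizer_iff F).mp hcB x hx) hsx
  have h2 : (2 : F) = 0 := by exact_mod_cast hF ▸ ringChar.Nat.cast_ringChar (R := F)
  have : Algebra.IsCentral F B := ⟨hBcentral.le⟩
  obtain ⟨x, hxB, hsx, hnalt⟩ :=
    B.exists_symm_not_alt h2 hanti hinv fun x hx => (hσB x).mp hx
  exact ⟨fun hall => hnalt ((hall x hxB).mp ⟨_, hsymm_alt x hxB hsx⟩),
    fun x hx hsx _ => ⟨_, hsymm_alt x hx hsx⟩⟩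

theorem alt_inter_subalgebra_ne_alt_of_symplectic_centralizer
    (F : Type) [Field F] (hF : ringChar F = 2)
    (A : Type) [Ring A] [Algebra F A] [FiniteDimensional F A]
    [Algebra.IsCentral F A] [IsSimpleRing A]
    (σ : A →ₗ[F] A)
    (hanti : ∀ x y, σ (x * y) = σ y * σ x)
    (hinv : ∀ x, σ (σ x) = x)
    (B : Subalgebra F A)
    (hBsimple : IsSimpleRing B)
    (hBcentral : Subalgebra.center F B = ⊥)
    (hσB : ∀ x, x ∈ B ↔ σ x ∈ B)
    (hsymp : ∃ c ∈ Subalgebra.centralizer F (B : Set A), c - σ c = 1) :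
    (¬ ∀ x ∈ B, ((∃ y : A, y - σ y = x) ↔ (∃ y ∈ B, y - σ y = x))) ∧
    ∀ x ∈ B, σ x = x → (¬ ∃ y ∈ B, y - σ y = x) → ∃ y : A, y - σ y = x :=
  alt_inter_subalgebra_ne_alt_of_symplectic_centralizer_general F hF A σ hanti hinv B hBsimple
    hBcentral hσB hsymp
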